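/- Under the hypotheses of the semismooth Newton convergence theorem, if additionally Φ is β-order ∂Φ-semismooth at ū for some 0 < β ≤ 1 (i.e., sup_{M ∈ ∂Φ(ū+v)} ‖Φ(ū+v) − Φ(ū) − Mv‖_Y ≤ C_σ ‖v‖_X^{1+β} for ‖v‖_X < δ), then the Newton iterates satisfy ‖u_{j+1} − ū‖ ≤ C C_σ ‖u_j − ū‖^{1+β} for all j large, i.e., convergence is of order 1+β. -/

import Mathlib

open Filter

/-!
Since `Φ ū = 0` and `N_j` inverts `M_j`, the Newton error is
`u_{j+1} - ū = -N_j (Φ u_j - Φ ū - M_j (u_j - ū))`, so the uniform bound `‖N_j‖ ≤ C`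
and `β`-order semismoothness give `‖u_{j+1} - ū‖ ≤ C C_σ ‖u_j - ū‖^{1+β}` as long as
`u_j` is close to `ū`. Near `0` the right-hand side is at most `‖u_j - ū‖`, so the
iterates never leave a small ball around `ū` and the estimate holds from the start.
-/

lemma Real.exists_pos_mul_rpow_one_add_le {K β : ℝ} (hK : 0 ≤ K) (hβ : 0 < β) :
    ∃ s > 0, ∀ t, 0 ≤ t → t ≤ s → K * t ^ (1 + β) ≤ t := by
  refine ⟨(K + 1)⁻¹ ^ β⁻¹, by positivity, fun t ht hts => ?_⟩
  have hpow : t ^ β ≤ (K + 1)⁻¹ := by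
    calc t ^ β ≤ ((K + 1)⁻¹ ^ β⁻¹) ^ β := Real.rpow_le_rpow ht hts hβ.le
      _ = (K + 1)⁻¹ := Real.rpow_inv_rpow (by positivity) hβ.ne'
  have hKpow : K * t ^ β ≤ 1 := by
    calc K * t ^ β ≤ K * (K + 1)⁻¹ := mul_le_mul_of_nonneg_left hpow hK
      _ ≤ 1 := by rw [← div_eq_mul_inv, div_le_one (by positivity)]; linarith
  calc K * t ^ (1 + β) = t * (K * t ^ β) := by
        rw [Real.rpow_add' ht (by positivity), Real.rpow_one]; ring
    _ ≤ t := mul_le_of_le_one_right ht hKpow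

lemma forall_lt_of_step_le {α : Type*} [Preorder α] {e : ℕ → α} {δ : α}
    (hstep : ∀ j, e j < δ → e (j + 1) ≤ e j) (h0 : e 0 < δ) : ∀ j, e j < δ
  | 0 => h0
  | j + 1 => (hstep j (forall_lt_of_step_le hstep h0 j)).trans_lt
      (forall_lt_of_step_le hstep h0 j)

section Newton

variable {X Y : Type*} [NormedAddCommGroup X] [NormedSpace ℝ X]
  [NormedAddCommGroup Y] [NormedSpace ℝ Y]

lemma ContinuousLinearMap.eq_of_leftInverse_of_rightInverse {M : X →L[ℝ] Y}
    {N N' : Y →L[ℝ] X}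
    (hN : ∀ x, N (M x) = x) (hN' : ∀ y, M (N' y) = y) : N = N' :=
  DFunLike.coe_injective (Function.LeftInverse.eq_rightInverse hN hN')

lemma newton_step_sub_eq {Φ : X → Y} {ub u : X} (hzero : Φ ub = 0) {M : X →L[ℝ] Y}
    {N : Y →L[ℝ] X} (hN : ∀ x, N (M x) = x) :
    u - N (Φ u) - ub = -N (Φ u - Φ ub - M (u - ub)) := by
  rw [map_sub, map_sub, hzero, map_zero, hN]
  abel

lemma norm_newton_step_sub_le {Φ : X → Y} {ub u : X} (hzero : Φ ub = 0) {M : X →L[ℝ] Y}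
    {N : Y →L[ℝ] X} (hN : ∀ x, N (M x) = x) :
    ‖u - N (Φ u) - ub‖ ≤ ‖N‖ * ‖Φ u - Φ ub - M (u - ub)‖ := by
  rw [newton_step_sub_eq hzero hN, norm_neg]
  exact N.le_opNorm _

end Newton

theorem stmt_10_general {X Y : Type*} [NormedAddCommGroup X] [NormedSpace ℝ X]
    [NormedAddCommGroup Y] [NormedSpace ℝ Y]
    (Φ : X → Y)
    (DΦ : X → Set (X →L[ℝ] Y))
    (ub : X) (hzero : Φ ub = 0)
    (β : ℝ) (hβ0 : 0 < β) (Cσ : ℝ) (hCσ : 0 < Cσ)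
    (horder : ∃ δ > 0, ∀ v : X, ‖v‖ < δ →
      ∀ M ∈ DΦ (ub + v), ‖Φ (ub + v) - Φ ub - M v‖ ≤ Cσ * ‖v‖ ^ (1 + β))
    (C : ℝ) (hC : 0 < C)
    (hinv : ∃ ρ > 0, ∀ u : X, ‖u - ub‖ < ρ → ∀ M ∈ DΦ u,
      ∃ N : Y →L[ℝ] X, ‖N‖ ≤ C ∧ (∀ x, N (M x) = x) ∧ (∀ y, M (N y) = y)) :
    ∃ δ > 0, ∀ (u : ℕ → X) (M : ℕ → X →L[ℝ] Y) (N : ℕ → Y →L[ℝ] X),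
      ‖u 0 - ub‖ < δ →
      (∀ j, M j ∈ DΦ (u j)) →
      (∀ j, (∀ x, N j (M j x) = x) ∧ (∀ y, M j (N j y) = y)) →
      (∀ j, u (j + 1) = u j - N j (Φ (u j))) →
      ∃ j₀ : ℕ, ∀ j ≥ j₀, ‖u (j + 1) - ub‖ ≤ C * Cσ * ‖u j - ub‖ ^ (1 + β) := by
  obtain ⟨δσ, hδσ, hσ⟩ := horder
  obtain ⟨ρ, hρ, hρinv⟩ := hinv
  obtain ⟨s, hs, hsK⟩ :=
    Real.exists_pos_mul_rpow_one_add_le (by positivity : 0 ≤ C * Cσ) hβ0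
  refine ⟨min (min ρ δσ) s, by positivity, fun u M N h0 hM hN hu => ⟨0, fun k _ => ?_⟩⟩
  have hstep : ∀ j, ‖u j - ub‖ < min ρ δσ →
      ‖u (j + 1) - ub‖ ≤ C * Cσ * ‖u j - ub‖ ^ (1 + β) := by
    intro j hj
    obtain ⟨N', hN'C, -, hN'⟩ :=
      hρinv (u j) (hj.trans_le (min_le_left _ _)) (M j) (hM j)
    have hNC : ‖N j‖ ≤ C :=
      (ContinuousLinearMap.eq_of_leftInverse_of_rightInverse (hN j).1 hN') ▸ hN'C
    have hub : ub + (u j - ub) = u j := add_sub_cancel ub (u j)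
    have hσj := hσ (u j - ub) (hj.trans_le (min_le_right _ _)) (M j) (by rw [hub]; exact hM j)
    rw [hub] at hσj
    calc ‖u (j + 1) - ub‖ ≤ ‖N j‖ * ‖Φ (u j) - Φ ub - M j (u j - ub)‖ :=
          hu j ▸ norm_newton_step_sub_le hzero (hN j).1
      _ ≤ C * (Cσ * ‖u j - ub‖ ^ (1 + β)) :=
          mul_le_mul hNC hσj (norm_nonneg _) hC.le
      _ = C * Cσ * ‖u j - ub‖ ^ (1 + β) := by ring
  have hball : ∀ j, ‖u j - ub‖ < min (min ρ δσ) s :=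
    forall_lt_of_step_le (fun j hj => (hstep j (hj.trans_le (min_le_left _ _))).trans
      (hsK _ (norm_nonneg _) (hj.le.trans (min_le_right _ _)))) h0
  exact hstep k ((hball k).trans_le (min_le_left _ _))

/-- Semismooth Newton iteration of order `1+β`: under the hypotheses of the
semismooth Newton convergence theorem, if moreover `Φ` is `β`-order
`∂Φ`-semismooth at `ū`, then `‖u_{j+1} - ū‖ ≤ C C_σ ‖u_j - ū‖^{1+β}` for all
`j` large. -/
theorem stmt_10 {X Y : Type*} [NormedAddCommGroup X] [NormedSpace ℝ X]
    [CompleteSpace X] [NormedAddCommGroup Y] [NormedSpace ℝ Y]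
    (V : Set X) (hV : IsOpen V) (Φ : X → Y) (hΦc : ContinuousOn Φ V)
    (DΦ : X → Set (X →L[ℝ] Y)) (hne : ∀ u ∈ V, (DΦ u).Nonempty)
    (ub : X) (hubV : ub ∈ V) (hzero : Φ ub = 0)
    (hloc : ∃ r > 0, ∀ u : X, ‖u - ub‖ < r → Φ u = 0 → u = ub)
    (hss : ∀ ε > 0, ∃ δ > 0, ∀ v : X, ‖v‖ < δ →
      ∀ M ∈ DΦ (ub + v), ‖Φ (ub + v) - Φ ub - M v‖ ≤ ε * ‖v‖)
    (β : ℝ) (hβ0 : 0 < β) (hβ1 : β ≤ 1) (Cσ : ℝ) (hCσ : 0 < Cσ)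
    (horder : ∃ δ > 0, ∀ v : X, ‖v‖ < δ →
      ∀ M ∈ DΦ (ub + v), ‖Φ (ub + v) - Φ ub - M v‖ ≤ Cσ * ‖v‖ ^ (1 + β))
    (C : ℝ) (hC : 0 < C)
    (hinv : ∃ ρ > 0, ∀ u : X, ‖u - ub‖ < ρ → ∀ M ∈ DΦ u,
      ∃ N : Y →L[ℝ] X, ‖N‖ ≤ C ∧ (∀ x, N (M x) = x) ∧ (∀ y, M (N y) = y)) :
    ∃ δ > 0, ∀ (u : ℕ → X) (M : ℕ → X →L[ℝ] Y) (N : ℕ → Y →L[ℝ] X),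
      ‖u 0 - ub‖ < δ →
      (∀ j, M j ∈ DΦ (u j)) →
      (∀ j, (∀ x, N j (M j x) = x) ∧ (∀ y, M j (N j y) = y)) →
      (∀ j, u (j + 1) = u j - N j (Φ (u j))) →
      ∃ j₀ : ℕ, ∀ j ≥ j₀, ‖u (j + 1) - ub‖ ≤ C * Cσ * ‖u j - ub‖ ^ (1 + β) :=
  stmt_10_general Φ DΦ ub hzero β hβ0 Cσ hCσ horder C hC hinv
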